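/- arXiv:2412.02441 — 2 statements merged into one kernel-verified Lean document; each statement's English description precedes it below -/
import Mathlib

section
/- Fix ε, δ ∈ (0,1), k_max ∈ ℕ, a finite proposal class P, and m ≥ log(|P|·k_max/δ)·2·k_max/ε. Let μ be a probability measure on X, and suppose a bottom-up reasoning process outputs a computation graph with k ≤ k_max vertices, where (i) the decomposition oracle is (ε/2)-correct, i.e., the set of x on which correctness of all validators does not imply correctness of the output has μ-measure at most ε/2, and (ii) for each vertex i, the critic accepted f_i because its validator passed on all m i.i.d. samples. Then with probability at least 1-δ over the sample, μ{x : o_k(x) is a correct output for x} ≥ 1 - ε. -/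
open MeasureTheory
open scoped ENNReal

theorem stmt_8 {X α : Type*} [MeasurableSpace X] (μ : Measure X)
    [IsProbabilityMeasure μ]
    (ε δ : ℝ) (hε : ε ∈ Set.Ioo (0:ℝ) 1) (hδ : δ ∈ Set.Ioo (0:ℝ) 1)
    (kmax k : ℕ) (hk0 : 0 < k) (hk : k ≤ kmax)
    (P : Finset α) (hP : P.Nonempty) (m : ℕ)
    (hm : (m : ℝ) ≥ Real.log ((P.card : ℝ) * kmax / δ) * 2 * kmax / ε)
    -- EV p x : whether the Example Validator of proposal p accepts on the inputs induced by x
    (EV : α → X → Bool)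
    -- good c : the set of x on which the computation graph built from the proposals c
    -- outputs a correct answer
    (good : (Fin k → α) → Set X) (hgood : ∀ c, MeasurableSet (good c))
    -- the decomposition oracle is (ε/2)-correct: except on a set of measure ε/2,
    -- if all validators pass on x then the graph output on x is correct
    (horacle : ∀ c : Fin k → α, (∀ i, c i ∈ P) →
      μ {x | (∀ i, EV (c i) x = true) ∧ x ∉ good c} ≤ ENNReal.ofReal (ε / 2))
    -- the proposal chosen for each vertex, as a function of the i.i.d. sample
    (choice : (Fin m → X) → Fin k → α)
    (hchoiceP : ∀ xs i, choice xs i ∈ P)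
    -- the critic accepted each chosen proposal because its validator passed on all m samples
    (hcritic : ∀ xs (i : Fin k) (t : Fin m), EV (choice xs i) (xs t) = true) :
    ENNReal.ofReal (1 - δ) ≤
      (Measure.pi fun _ : Fin m => μ)
        {xs | ENNReal.ofReal (1 - ε) ≤ μ (good (choice xs))} := by
  classical
  obtain ⟨hε0, hε1⟩ := hε
  obtain ⟨hδ0, hδ1⟩ := hδ
  have hkmax1 : (1:ℕ) ≤ kmax := le_trans hk0 hk
  have hkmaxR : (1:ℝ) ≤ (kmax:ℝ) := by exact_mod_cast hkmax1
  have hPcard : (1:ℝ) ≤ (P.card : ℝ) := by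
    have := Finset.card_pos.mpr hP; exact_mod_cast this
  set ν := (Measure.pi fun _ : Fin m => μ) with hν
  set S : Set (Fin m → X) := {xs | ENNReal.ofReal (1 - ε) ≤ μ (good (choice xs))} with hS
  -- the set of tuples of proposals
  set tuples : Finset (Fin k → α) := Fintype.piFinset (fun _ : Fin k => P) with htuples
  -- for a bad tuple c, the set of x where all validators pass has outer measure ≤ 1 - ε/2
  have houter : ∀ c : Fin k → α, (∀ i, c i ∈ P) → μ (good c) < ENNReal.ofReal (1 - ε) →
      μ {x | ∀ i, EV (c i) x = true} ≤ ENNReal.ofReal (1 - ε/2) := by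
    intro c hc hbadc
    have hsub : {x | ∀ i, EV (c i) x = true} ⊆
        {x | (∀ i, EV (c i) x = true) ∧ x ∉ good c} ∪ good c := by
      intro x hx
      by_cases hg : x ∈ good c
      · exact Or.inr hg
      · exact Or.inl ⟨hx, hg⟩
    calc μ {x | ∀ i, EV (c i) x = true}
        ≤ μ ({x | (∀ i, EV (c i) x = true) ∧ x ∉ good c} ∪ good c) := measure_mono hsub
      _ ≤ μ {x | (∀ i, EV (c i) x = true) ∧ x ∉ good c} + μ (good c) := measure_union_le _ _
      _ ≤ ENNReal.ofReal (ε/2) + ENNReal.ofReal (1 - ε) :=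
          add_le_add (horacle c hc) (le_of_lt hbadc)
      _ = ENNReal.ofReal (1 - ε/2) := by
          rw [← ENNReal.ofReal_add (by positivity) (by linarith)]
          congr 1
          ring
  -- product-measure bound for each bad tuple
  have hprod : ∀ c : Fin k → α, (∀ i, c i ∈ P) → μ (good c) < ENNReal.ofReal (1 - ε) →
      ν {xs | ∀ t, ∀ i, EV (c i) (xs t) = true} ≤ ENNReal.ofReal ((1 - ε/2)^m) := by
    intro c hc hbadc
    set T := {x | ∀ i, EV (c i) x = true} with hT
    have hsub : {xs : Fin m → X | ∀ t, ∀ i, EV (c i) (xs t) = true} ⊆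
        Set.pi Set.univ (fun _ : Fin m => toMeasurable μ T) := by
      intro xs hxs t _
      exact subset_toMeasurable μ T (hxs t)
    calc ν {xs | ∀ t, ∀ i, EV (c i) (xs t) = true}
        ≤ ν (Set.pi Set.univ (fun _ : Fin m => toMeasurable μ T)) := measure_mono hsub
      _ = ∏ _t : Fin m, μ (toMeasurable μ T) := Measure.pi_pi _ _
      _ = (μ (toMeasurable μ T))^m := by
          rw [Finset.prod_const, Finset.card_univ, Fintype.card_fin]
      _ ≤ (ENNReal.ofReal (1 - ε/2))^m := by
          gcongr
          rw [measure_toMeasurable]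
          exact houter c hc hbadc
      _ = ENNReal.ofReal ((1 - ε/2)^m) := by
          rw [ENNReal.ofReal_pow (by linarith)]
  -- the complement of S is covered by the bad-tuple events
  have hcompl : Sᶜ ⊆ ⋃ c ∈ tuples.filter (fun c => μ (good c) < ENNReal.ofReal (1 - ε)),
      {xs : Fin m → X | ∀ t, ∀ i, EV (c i) (xs t) = true} := by
    intro xs hxs
    have hbadc : μ (good (choice xs)) < ENNReal.ofReal (1 - ε) := not_le.mp hxs
    simp only [Set.mem_iUnion, Set.mem_setOf_eq]
    exact ⟨choice xs,
      Finset.mem_filter.mpr ⟨Fintype.mem_piFinset.mpr (fun i => hchoiceP xs i), hbadc⟩,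
      fun t i => hcritic xs i t⟩
  -- real-number bound on the union bound
  have hreal : ((P.card : ℝ)^k) * (1 - ε/2)^m ≤ δ := by
    set L : ℝ := (P.card : ℝ) * kmax / δ with hL
    have hLpos : 0 < L := by positivity
    have hmlog : (kmax : ℝ) * Real.log L ≤ (m : ℝ) * (ε/2) := by
      have h2 : Real.log L * 2 * kmax / ε * (ε/2) ≤ (m:ℝ) * (ε/2) := by
        apply mul_le_mul_of_nonneg_right hm (by positivity)
      calc (kmax : ℝ) * Real.log L = Real.log L * 2 * kmax / ε * (ε/2) := by
            field_simp
        _ ≤ (m : ℝ) * (ε/2) := h2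
    have hexp : (1 - ε/2)^m ≤ Real.exp (-(ε/2))^m := by
      apply pow_le_pow_left₀ (by linarith)
      linarith [Real.add_one_le_exp (-(ε/2))]
    have hexp2 : Real.exp (-(ε/2))^m = Real.exp (-((m:ℝ) * (ε/2))) := by
      rw [← Real.exp_nat_mul]; ring_nf
    have hexp3 : Real.exp (-((m:ℝ) * (ε/2))) ≤ Real.exp (-((kmax:ℝ) * Real.log L)) := by
      apply Real.exp_le_exp.mpr; linarith
    have hexp4 : Real.exp (-((kmax:ℝ) * Real.log L)) = (L^kmax)⁻¹ := by
      rw [show -((kmax:ℝ) * Real.log L) = (kmax:ℝ) * Real.log L⁻¹ by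
        rw [Real.log_inv]; ring]
      rw [Real.exp_nat_mul, Real.exp_log (by positivity), inv_pow]
    have hfin : ((P.card : ℝ)^k) * (L^kmax)⁻¹ ≤ δ := by
      have hLk : L^kmax = ((P.card:ℝ) * kmax / δ)^kmax := rfl
      have hcardk : ((P.card : ℝ))^k ≤ ((P.card : ℝ))^kmax :=
        pow_le_pow_right₀ hPcard hk
      have : ((P.card : ℝ))^kmax * (L^kmax)⁻¹ = (δ/kmax)^kmax := by
        rw [hLk, div_pow, mul_pow, div_pow]
        field_simp
      have hdk : (δ/kmax)^kmax ≤ δ := by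
        calc (δ/kmax)^kmax ≤ δ^kmax := by
              apply pow_le_pow_left₀ (by positivity)
              calc δ/kmax ≤ δ/1 := by
                    apply div_le_div_of_nonneg_left (le_of_lt hδ0) one_pos hkmaxR
                _ = δ := div_one δ
          _ ≤ δ^1 := pow_le_pow_of_le_one (le_of_lt hδ0) (le_of_lt hδ1) hkmax1
          _ = δ := pow_one δ
      calc ((P.card : ℝ)^k) * (L^kmax)⁻¹ ≤ ((P.card : ℝ)^kmax) * (L^kmax)⁻¹ := by
            gcongr
        _ = (δ/kmax)^kmax := this
        _ ≤ δ := hdk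
    calc ((P.card : ℝ)^k) * (1 - ε/2)^m ≤ ((P.card : ℝ)^k) * (L^kmax)⁻¹ := by
          apply mul_le_mul_of_nonneg_left _ (by positivity)
          rw [← hexp4]
          exact le_trans hexp (by rw [hexp2]; exact hexp3)
      _ ≤ δ := hfin
  -- measure of the complement of S
  have hScompl : ν Sᶜ ≤ ENNReal.ofReal δ := by
    calc ν Sᶜ ≤ ν (⋃ c ∈ tuples.filter (fun c => μ (good c) < ENNReal.ofReal (1 - ε)),
          {xs : Fin m → X | ∀ t, ∀ i, EV (c i) (xs t) = true}) := measure_mono hcompl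
      _ ≤ ∑ c ∈ tuples.filter (fun c => μ (good c) < ENNReal.ofReal (1 - ε)),
          ν {xs : Fin m → X | ∀ t, ∀ i, EV (c i) (xs t) = true} :=
            measure_biUnion_finset_le _ _
      _ ≤ ∑ c ∈ tuples.filter (fun c => μ (good c) < ENNReal.ofReal (1 - ε)),
          ENNReal.ofReal ((1 - ε/2)^m) := by
            apply Finset.sum_le_sum
            intro c hc
            rw [Finset.mem_filter] at hc
            exact hprod c (Fintype.mem_piFinset.mp hc.1) hc.2
      _ = ((tuples.filter (fun c => μ (good c) < ENNReal.ofReal (1 - ε))).card : ℝ≥0∞)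
            * ENNReal.ofReal ((1 - ε/2)^m) := by
            rw [Finset.sum_const, nsmul_eq_mul]
      _ ≤ ((P.card ^ k : ℕ) : ℝ≥0∞) * ENNReal.ofReal ((1 - ε/2)^m) := by
            gcongr
            exact_mod_cast le_trans (Finset.card_filter_le _ _)
              (le_of_eq (by simp [htuples, Fintype.card_piFinset]))
      _ = ENNReal.ofReal (((P.card : ℝ)^k) * (1 - ε/2)^m) := by
            rw [ENNReal.ofReal_mul (by positivity)]
            congr 1
            rw [← ENNReal.ofReal_natCast]
            push_cast
            ring_nf
      _ ≤ ENNReal.ofReal δ := ENNReal.ofReal_le_ofReal hreal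
  -- conclude
  have huniv : (1:ℝ≥0∞) ≤ ν S + ν Sᶜ := by
    have : ν Set.univ ≤ ν S + ν Sᶜ := by
      rw [← Set.union_compl_self S]
      exact measure_union_le _ _
    have hνuniv : ν Set.univ = 1 := by
      rw [hν, Measure.pi_univ]
      simp
    rw [hνuniv] at this
    exact this
  have : (1:ℝ≥0∞) ≤ ν S + ENNReal.ofReal δ := le_trans huniv (by gcongr)
  rw [ENNReal.ofReal_sub _ (le_of_lt hδ0), ENNReal.ofReal_one]
  exact tsub_le_iff_right.mpr this
end

section
/- Fix ε, δ ∈ (0,1), k_max ∈ ℕ, a finite proposal class P, and m ≥ log(|P|·k_max/δ)·k_max/ε. Let μ be a probability measure on X, and suppose a top-down reasoning process produces an implementation ĝ of g using k ≤ k_max helper functions, where for each helper function f the critic accepted f because EV(f, s) returned True for every logged input s ∈ S(x_t) on all m i.i.d. samples x₁,…,x_m. Then with probability at least 1-δ over the sample, μ{x : ĝ(x) is a correct output for x} ≥ 1 - ε. -/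
open MeasureTheory ENNReal

lemma stmt9_real_bound (ε δ : ℝ) (hε0 : 0 < ε) (hε1 : ε < 1) (hδ0 : 0 < δ) (hδ1 : δ < 1)
    (kmax k : ℕ) (hk : k ≤ kmax) (hkm : 1 ≤ kmax) (N : ℝ) (hN : 1 ≤ N) (m : ℕ)
    (hm : (m : ℝ) ≥ Real.log (N * kmax / δ) * kmax / ε) :
    N ^ k * (1 - ε) ^ m ≤ δ := by
  have hN0 : (0:ℝ) < N := lt_of_lt_of_le one_pos hN
  have hkm' : (1:ℝ) ≤ (kmax : ℝ) := by exact_mod_cast hkm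
  have hk' : (k:ℝ) ≤ (kmax:ℝ) := by exact_mod_cast hk
  have hNk : (0:ℝ) < N ^ k := pow_pos hN0 k
  -- ε * m ≥ log(N*kmax/δ) * kmax
  have h1 : Real.log (N * kmax / δ) * kmax ≤ ε * m := by
    have := (div_le_iff₀ hε0).mp hm
    linarith
  -- log (N * kmax / δ) = log N + log (kmax / δ)
  have hlogsplit : Real.log (N * kmax / δ) = Real.log N + Real.log ((kmax:ℝ) / δ) := by
    rw [mul_div_assoc, Real.log_mul (ne_of_gt hN0)]
    positivity
  have hlogN : 0 ≤ Real.log N := Real.log_nonneg hN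
  have hlogkd : -Real.log δ ≤ Real.log ((kmax:ℝ)/δ) := by
    rw [← Real.log_inv, ← one_div]
    exact Real.log_le_log (by positivity) (by gcongr)
  have hlogkd0 : 0 < Real.log ((kmax:ℝ)/δ) := by
    apply Real.log_pos
    rw [lt_div_iff₀ hδ0]
    nlinarith
  -- key: k * log N - log δ ≤ ε * m
  have hkey : (k:ℝ) * Real.log N - Real.log δ ≤ ε * m := by
    have : (k:ℝ) * Real.log N - Real.log δ ≤ Real.log (N * kmax / δ) * kmax := by
      rw [hlogsplit]
      nlinarith
    linarith
  -- (1-ε)^m ≤ exp (-(ε*m))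
  have h2 : (1 - ε) ^ m ≤ Real.exp (-(ε * m)) := by
    calc (1 - ε) ^ m ≤ Real.exp (-ε) ^ m := by
          apply pow_le_pow_left₀ (by linarith)
          linarith [Real.add_one_le_exp (-ε)]
      _ = Real.exp (-(ε * m)) := by
          rw [← Real.exp_nat_mul]; ring_nf
  have h3 : Real.exp (-(ε * m)) ≤ Real.exp (Real.log δ - k * Real.log N) := by
    apply Real.exp_le_exp.mpr; linarith
  have h4 : Real.exp (Real.log δ - k * Real.log N) = δ / N ^ k := by
    rw [Real.exp_sub, Real.exp_log hδ0, Real.exp_nat_mul, Real.exp_log hN0]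
  calc N ^ k * (1 - ε) ^ m ≤ N ^ k * (δ / N ^ k) := by
        apply mul_le_mul_of_nonneg_left _ (le_of_lt hNk)
        rw [← h4]; exact le_trans h2 h3
    _ = δ := by field_simp


theorem stmt_9 {X α A : Type*} [MeasurableSpace X] (μ : Measure X)
    [IsProbabilityMeasure μ]
    (ε δ : ℝ) (hε : ε ∈ Set.Ioo (0:ℝ) 1) (hδ : δ ∈ Set.Ioo (0:ℝ) 1)
    (kmax k : ℕ) (hk0 : 0 < k) (hk : k ≤ kmax)
    (P : Finset α) (hP : P.Nonempty) (m : ℕ)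
    (hm : (m : ℝ) ≥ Real.log ((P.card : ℝ) * kmax / δ) * kmax / ε)
    -- S p x : the finite set of logged inputs to the helper function of proposal p
    -- when the implementation runs on x; EV p s : validator verdict on input s
    (S : α → X → Finset A) (EV : α → A → Bool)
    -- correct c : the set of x on which the implementation ĝ built from helper
    -- proposals c outputs a correct answer
    (correct : (Fin k → α) → Set X) (hcorrect : ∀ c, MeasurableSet (correct c))
    -- ĝ(x) can be incorrect only if some call to some helper function is incorrect
    (hdecomp : ∀ c : Fin k → α, (∀ i, c i ∈ P) →
      {x | ∀ i, ∀ s ∈ S (c i) x, EV (c i) s = true} ⊆ correct c)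
    -- the helper proposal chosen for each of the k helper functions, given the sample
    (choice : (Fin m → X) → Fin k → α)
    (hchoiceP : ∀ xs i, choice xs i ∈ P)
    -- the critic accepted each chosen helper because EV returned True on every
    -- logged input on all m samples
    (hcritic : ∀ xs (i : Fin k) (t : Fin m),
      ∀ s ∈ S (choice xs i) (xs t), EV (choice xs i) s = true) :
    ENNReal.ofReal (1 - δ) ≤
      (Measure.pi fun _ : Fin m => μ)
        {xs | ENNReal.ofReal (1 - ε) ≤ μ (correct (choice xs))} := by
  obtain ⟨hε0, hε1⟩ := hε
  obtain ⟨hδ0, hδ1⟩ := hδ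
  have hkm : 1 ≤ kmax := le_trans hk0 hk
  set ν := Measure.pi fun _ : Fin m => μ with hν
  haveI : IsProbabilityMeasure ν := by rw [hν]; infer_instance
  set G : (Fin k → α) → Set X :=
    fun c => {x | ∀ i, ∀ s ∈ S (c i) x, EV (c i) s = true} with hGdef
  set T : (Fin k → α) → Set X := fun c => toMeasurable μ (G c) with hTdef
  -- the failure event per tuple
  set E : (Fin k → α) → Set (Fin m → X) := fun c =>
    if μ (G c) < ENNReal.ofReal (1 - ε) then Set.univ.pi (fun _ => T c) else ∅ with hEdef
  set F : Finset (Fin k → α) := Fintype.piFinset fun _ => P with hFdef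
  set Tgt : Set (Fin m → X) :=
    {xs | ENNReal.ofReal (1 - ε) ≤ μ (correct (choice xs))} with hTgt
  -- complement of target is covered by the union of failure events
  have hsub : Tgtᶜ ⊆ ⋃ c ∈ F, E c := by
    intro xs hxs
    simp only [hTgt, Set.mem_compl_iff, Set.mem_setOf_eq, not_le] at hxs
    have hmem : choice xs ∈ F := by
      simp only [hFdef, Fintype.mem_piFinset]; exact hchoiceP xs
    refine Set.mem_biUnion hmem ?_
    · have hGc : μ (G (choice xs)) < ENNReal.ofReal (1 - ε) := by
        refine lt_of_le_of_lt ?_ hxs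
        exact measure_mono (hdecomp (choice xs) (hchoiceP xs))
      simp only [hEdef, if_pos hGc]
      intro t _
      exact subset_toMeasurable μ _ (fun i s hs => hcritic xs i t s hs)
  -- each failure event has small measure
  have hE : ∀ c, ν (E c) ≤ ENNReal.ofReal (1 - ε) ^ m := by
    intro c
    simp only [hEdef]
    split_ifs with hc
    · have : ν (Set.univ.pi fun _ : Fin m => T c) = μ (G c) ^ m := by
        rw [hν, Measure.pi_pi]
        simp [hTdef, measure_toMeasurable]
      rw [this]
      exact pow_le_pow_left' (le_of_lt hc) m
    · simp
  -- union bound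
  have hunion : ν Tgtᶜ ≤ (P.card : ℝ≥0∞) ^ k * ENNReal.ofReal (1 - ε) ^ m := by
    calc ν Tgtᶜ ≤ ν (⋃ c ∈ F, E c) := measure_mono hsub
      _ ≤ ∑ c ∈ F, ν (E c) := measure_biUnion_finset_le F E
      _ ≤ ∑ _c ∈ F, ENNReal.ofReal (1 - ε) ^ m := Finset.sum_le_sum fun c _ => hE c
      _ = (F.card : ℝ≥0∞) * ENNReal.ofReal (1 - ε) ^ m := by
          rw [Finset.sum_const, nsmul_eq_mul]
      _ = (P.card : ℝ≥0∞) ^ k * ENNReal.ofReal (1 - ε) ^ m := by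
          congr 1
          simp [hFdef, Fintype.card_piFinset]
  -- numeric bound
  have hnum : (P.card : ℝ≥0∞) ^ k * ENNReal.ofReal (1 - ε) ^ m ≤ ENNReal.ofReal δ := by
    have hcard : 1 ≤ P.card := Finset.card_pos.mpr hP
    have hNR : (1:ℝ) ≤ (P.card : ℝ) := by exact_mod_cast hcard
    have hreal : ((P.card : ℝ)) ^ k * (1 - ε) ^ m ≤ δ :=
      stmt9_real_bound ε δ hε0 hε1 hδ0 hδ1 kmax k hk hkm _ hNR m hm
    calc (P.card : ℝ≥0∞) ^ k * ENNReal.ofReal (1 - ε) ^ m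
        = ENNReal.ofReal ((P.card : ℝ) ^ k * (1 - ε) ^ m) := by
          rw [ENNReal.ofReal_mul (by positivity), ENNReal.ofReal_pow (by positivity),
            ENNReal.ofReal_pow (by linarith), ENNReal.ofReal_natCast]
      _ ≤ ENNReal.ofReal δ := ENNReal.ofReal_le_ofReal hreal
  -- conclude
  have hone : (1 : ℝ≥0∞) ≤ ν Tgt + ENNReal.ofReal δ := by
    have : (1 : ℝ≥0∞) = ν (Tgt ∪ Tgtᶜ) := by
      rw [Set.union_compl_self]; exact (measure_univ).symm
    rw [this]
    calc ν (Tgt ∪ Tgtᶜ) ≤ ν Tgt + ν Tgtᶜ := measure_union_le _ _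
      _ ≤ ν Tgt + ENNReal.ofReal δ := add_le_add_right (le_trans hunion hnum) _
  have hδfin : ENNReal.ofReal δ ≠ ⊤ := ENNReal.ofReal_ne_top
  refine ENNReal.le_of_add_le_add_right hδfin ?_
  calc ENNReal.ofReal (1 - δ) + ENNReal.ofReal δ
      = ENNReal.ofReal 1 := by rw [← ENNReal.ofReal_add (by linarith) (le_of_lt hδ0)]; norm_num
    _ = 1 := ENNReal.ofReal_one
    _ ≤ ν Tgt + ENNReal.ofReal δ := hone
end
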